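/- arXiv:1812.06560 — 2 statements merged into one kernel-verified Lean document; each statement's English description precedes it below -/
import Mathlib

section
/- Multivariate orthonormal polynomials exist with the prescribed degrees: for every n such that rank M̃_k(μ) ≥ n+1 for some k, one may construct polynomials p_0^μ, ..., p_n^μ orthonormal in L²(μ) with deg p_n^μ = k_n^μ := min{k ≥ 0 : rank M̃_k(μ) = n+1} (in particular k_0^μ = 0). Moreover, for k = k_n^μ there exists an invertible upper triangular (k+1)×(k+1) matrix R̃_k(μ) such that R̃_k(μ)* · M̃_k(μ) · R̃_k(μ) = E_k(μ) · E_k(μ)*, where E_k(μ) = (δ_{j, k_ℓ^μ})_{j=0,...,k, ℓ=0,...,n}; the submatrix M_n(μ) := E_k(μ)* · M̃_k(μ) · E_k(μ) is a maximal invertible submatrix of M̃_k(μ); and with the upper triangular invertible matrix R_n(μ) := E_k(μ)* · R̃_k(μ) · E_k(μ) one has R_n(μ)* · M_n(μ) · R_n(μ) = I and (p_0^μ(z), ..., p_n^μ(z)) = v_k(z) · E_k(μ) · R_n(μ). -/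
/-!
Run Gram–Schmidt on the monomials `z^{α(0)}, z^{α(1)}, …` in the semi-inner product of `L²(μ)`,
letting a residual `q_i` of norm zero contribute nothing to later steps; call `i` a pivot when
`‖q_i‖ ≠ 0`. The coefficient matrix `R̃_k` of the normalized residuals is upper triangular with
nonzero diagonal, and `R̃_k* M̃_k R̃_k` is the diagonal `0/1` matrix marking the pivots. Hence
`rank M̃_k` counts the pivots `≤ k`, and `k_n^μ` is the `n`-th pivot. A residual only involves
the monomial of its own index and those of earlier pivots, so the columns of `R̃_k` at pivots vanish
off the pivot rows; compressing to the pivots then gives `R_n* M_n R_n = I`, and `p_n` is the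
normalized residual at `k_n^μ`.
-/


open MeasureTheory Matrix Finset

namespace CD

variable {d : ℕ}

/-- The `L²(μ)` inner product of two polynomial functions. -/
noncomputable def inner2 (μ : Measure (Fin d → ℂ)) (f g : MvPolynomial (Fin d) ℂ) : ℂ :=
  ∫ z, MvPolynomial.eval z f * (starRingEnd ℂ) (MvPolynomial.eval z g) ∂μ

/-- The moment matrix `M̃_k(μ)` for an enumeration `α` of multi-indices. -/
noncomputable def momentMatrix (μ : Measure (Fin d → ℂ)) (α : ℕ → (Fin d →₀ ℕ)) (k : ℕ) :
    Matrix (Fin (k + 1)) (Fin (k + 1)) ℂ :=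
  Matrix.of fun j ℓ =>
    inner2 μ (MvPolynomial.monomial (α (ℓ : ℕ)) 1) (MvPolynomial.monomial (α (j : ℕ)) 1)

/-- `k_n^μ = min {k : rank M̃_k(μ) = n+1}`. -/
noncomputable def kdeg (μ : Measure (Fin d → ℂ)) (α : ℕ → (Fin d →₀ ℕ)) (n : ℕ) : ℕ :=
  sInf {k | (momentMatrix μ α k).rank = n + 1}

/-- `deg p ≤ k` with respect to the enumeration `α`. -/
def DegLE (α : ℕ → (Fin d →₀ ℕ)) (p : MvPolynomial (Fin d) ℂ) (k : ℕ) : Prop :=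
  ∀ m : ℕ, MvPolynomial.coeff (α m) p ≠ 0 → m ≤ k

/-- `deg p = k` with respect to the enumeration `α`. -/
def DegEq (α : ℕ → (Fin d →₀ ℕ)) (p : MvPolynomial (Fin d) ℂ) (k : ℕ) : Prop :=
  DegLE α p k ∧ MvPolynomial.coeff (α k) p ≠ 0

/-- An admissible enumeration of all multi-indices: a bijection starting at `0` such that
multiplication by any variable increases the index. -/
def AdmissibleEnum (α : ℕ → (Fin d →₀ ℕ)) : Prop :=
  Function.Bijective α ∧ α 0 = 0 ∧
    ∀ (j : Fin d) (n : ℕ), ∃ k : ℕ, n < k ∧ α k = α n + Finsupp.single j 1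

/-- The Christoffel–Darboux kernel `K_n(z,w) = ∑_{j≤n} p_j(z) conj (p_j(w))`. -/
noncomputable def CDkernel (p : ℕ → MvPolynomial (Fin d) ℂ) (n : ℕ) (z w : Fin d → ℂ) : ℂ :=
  ∑ j ∈ Finset.range (n + 1),
    MvPolynomial.eval z (p j) * (starRingEnd ℂ) (MvPolynomial.eval w (p j))

/-- `p_0, …, p_n` is the Gram–Schmidt orthonormal family in `L²(μ)`:
orthonormal, with `p_m` a linear combination of the monomials `z^{α(k_0)},…,z^{α(k_m)}`
with positive (real) leading coefficient. -/
def IsONBasisUpTo (μ : Measure (Fin d → ℂ)) (α : ℕ → (Fin d →₀ ℕ))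
    (p : ℕ → MvPolynomial (Fin d) ℂ) (n : ℕ) : Prop :=
  (∀ i ≤ n, ∀ j ≤ n, inner2 μ (p i) (p j) = if i = j then 1 else 0) ∧
  (∀ m ≤ n, ∃ c : Fin (m + 1) → ℂ, 0 < (c (Fin.last m)).re ∧ (c (Fin.last m)).im = 0 ∧
      p m = ∑ i : Fin (m + 1), MvPolynomial.monomial (α (kdeg μ α (i : ℕ))) (c i))

/-- The full Gram–Schmidt orthonormal sequence of `μ`. -/
def IsONBasis (μ : Measure (Fin d → ℂ)) (α : ℕ → (Fin d →₀ ℕ))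
    (p : ℕ → MvPolynomial (Fin d) ℂ) : Prop :=
  ∀ n, IsONBasisUpTo μ α p n

/-- The (closed) support of a measure. -/
def msupport {X : Type*} [TopologicalSpace X] [MeasurableSpace X] (μ : Measure X) : Set X :=
  {x | ∀ U : Set X, x ∈ U → IsOpen U → μ U ≠ 0}

/-- `𝒩(μ)`: the ideal of polynomials vanishing on `supp(μ)`. -/
def Nideal (μ : Measure (Fin d → ℂ)) : Set (MvPolynomial (Fin d) ℂ) :=
  {q | ∀ z ∈ msupport μ, MvPolynomial.eval z q = 0}

/-- `𝒩_n(μ) = {p ∈ 𝒩(μ) : deg p ≤ k_n^μ}`. -/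
def NidealLE (μ : Measure (Fin d → ℂ)) (α : ℕ → (Fin d →₀ ℕ)) (n : ℕ) :
    Set (MvPolynomial (Fin d) ℂ) :=
  {q | q ∈ Nideal μ ∧ DegLE α q (kdeg μ α n)}

/-- `𝒮_n(μ)`: the common zero set of `𝒩_n(μ)`. -/
def Svariety (μ : Measure (Fin d → ℂ)) (α : ℕ → (Fin d →₀ ℕ)) (n : ℕ) : Set (Fin d → ℂ) :=
  {z | ∀ q ∈ NidealLE μ α n, MvPolynomial.eval z q = 0}

/-- `𝒮(μ)`: the Zariski closure of `supp(μ)`, i.e. the common zero set of `𝒩(μ)`. -/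
def Szar (μ : Measure (Fin d → ℂ)) : Set (Fin d → ℂ) :=
  {z | ∀ q ∈ Nideal μ, MvPolynomial.eval z q = 0}

/-- `ℒ_n(μ)`: the span of `p_0,…,p_n`. -/
def Lspan (p : ℕ → MvPolynomial (Fin d) ℂ) (n : ℕ) : Set (MvPolynomial (Fin d) ℂ) :=
  {q | ∃ c : Fin (n + 1) → ℂ, q = ∑ j : Fin (n + 1), c j • p (j : ℕ)}

/-- The `L²(μ)` norm of a polynomial. -/
noncomputable def norm2 (μ : Measure (Fin d → ℂ)) (f : MvPolynomial (Fin d) ℂ) : ℝ :=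
  Real.sqrt ((inner2 μ f f).re)

/-- Multivariate cosine function `C_n(z,w)`. -/
noncomputable def coskM (p : ℕ → MvPolynomial (Fin d) ℂ) (n : ℕ) (z w : Fin d → ℂ) : ℂ :=
  CDkernel p n z w /
    ((Real.sqrt ((CDkernel p n z z).re) * Real.sqrt ((CDkernel p n w w).re) : ℝ) : ℂ)



/-- `E_k(μ)` with `k = k_n^μ`: the 0/1 matrix selecting the pivot monomials. -/
noncomputable def Emat (μ : Measure (Fin d → ℂ)) (α : ℕ → (Fin d →₀ ℕ)) (n : ℕ) :
    Matrix (Fin (kdeg μ α n + 1)) (Fin (n + 1)) ℂ :=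
  Matrix.of fun i j => if (i : ℕ) = kdeg μ α (j : ℕ) then 1 else 0

open MvPolynomial

theorem integrable_of_isCompact_support {X E : Type*} [TopologicalSpace X] [MeasurableSpace X]
    [OpensMeasurableSpace X] [T2Space X] [HereditarilyLindelofSpace X] [NormedAddCommGroup E]
    {μ : Measure X} [IsFiniteMeasureOnCompacts μ] (hμ : IsCompact μ.support) {f : X → E}
    (hf : Continuous f) : Integrable f μ := by
  have h := hf.continuousOn.integrableOn_compact (μ := μ) hμ
  rwa [IntegrableOn,
    Measure.restrict_eq_self_of_ae_mem (s := μ.support) Measure.support_mem_ae] at h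

theorem msupport_eq_support (μ : Measure (Fin d → ℂ)) : msupport μ = μ.support := by
  simp [msupport, Measure.support_eq_forall_isOpen, pos_iff_ne_zero]

def PolyIntegrable (μ : Measure (Fin d → ℂ)) : Prop :=
  ∀ f g : MvPolynomial (Fin d) ℂ, Integrable (fun z => eval z f * starRingEnd ℂ (eval z g)) μ

theorem polyIntegrable_of_isCompact_msupport {μ : Measure (Fin d → ℂ)} [IsFiniteMeasure μ]
    (hμ : IsCompact (msupport μ)) : PolyIntegrable μ := fun f g =>
  integrable_of_isCompact_support (msupport_eq_support μ ▸ hμ) <|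
    (continuous_eval f).mul (Complex.continuous_conj.comp (continuous_eval g))

section Nth

variable {p : ℕ → Prop} [DecidablePred p] {N : ℕ}

theorem nth_mem_of_lt_count {m : ℕ} (hm : m < Nat.count p N) : p (Nat.nth p m) :=
  Nat.nth_mem m fun hf => hm.trans_le (Nat.count_le_card hf N)

theorem nth_lt_nth_of_lt_count {m n : ℕ} (hmn : m < n) (hn : n < Nat.count p N) :
    Nat.nth p m < Nat.nth p n :=
  Nat.nth_lt_nth' hmn fun hf => hn.trans_le (Nat.count_le_card hf N)

theorem count_nth_succ_of_lt_count {n : ℕ} (hn : n < Nat.count p N) :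
    Nat.count p (Nat.nth p n + 1) = n + 1 :=
  Nat.count_nth_succ fun hf => hn.trans_le (Nat.count_le_card hf N)

theorem exists_nth_eq_of_le_nth {n i : ℕ} (hn : n < Nat.count p N) (hi : p i)
    (hin : i ≤ Nat.nth p n) : ∃ ℓ ≤ n, Nat.nth p ℓ = i := by
  refine ⟨Nat.count p i, ?_, Nat.nth_count hi⟩
  have h := Nat.count_monotone p hin
  rwa [Nat.count_nth fun hf => hn.trans_le (Nat.count_le_card hf N)] at h

end Nth

theorem isUnit_of_conjTranspose_mul_mul_eq_one {R ι : Type*} [CommRing R] [StarRing R]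
    [Fintype ι] [DecidableEq ι] {G X : Matrix ι ι R}
    (h : Xᴴ * G * X = 1) : IsUnit G ∧ IsUnit X := by
  have hG : (X * Xᴴ) * G = 1 := by
    rw [Matrix.mul_assoc, mul_eq_one_comm, h]
  exact ⟨(Matrix.isUnit_iff_isUnit_det _).mpr (Matrix.isUnit_det_of_left_inverse hG),
    (Matrix.isUnit_iff_isUnit_det _).mpr (Matrix.isUnit_det_of_left_inverse h)⟩

section Selection

variable {R ι κ : Type*} [CommRing R] [DecidableEq κ]

theorem mul_one_submatrix_id [Fintype κ] {m : Type*} (A : Matrix m κ R) (e : ι → κ) :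
    A * (1 : Matrix κ κ R).submatrix id e = A.submatrix id e := by
  ext i j
  simp [Matrix.mul_apply, Matrix.one_apply]

theorem one_submatrix_id_mul_submatrix [Fintype ι] {T : Matrix κ κ R} {e : ι → κ}
    (he : Function.Injective e) (hT : ∀ i ∉ Set.range e, ∀ j, T i (e j) = 0) :
    (1 : Matrix κ κ R).submatrix id e * T.submatrix e e = T.submatrix id e := by
  ext i j
  rw [Matrix.mul_apply]
  by_cases hi : i ∈ Set.range e
  · obtain ⟨ℓ, rfl⟩ := hi
    rw [Fintype.sum_eq_single ℓ fun ℓ' hℓ' => by simp [he.ne hℓ'.symm]]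
    simp [Matrix.one_apply]
  · have hne : ∀ ℓ, i ≠ e ℓ := fun ℓ h => hi ⟨ℓ, h.symm⟩
    simp [hne, hT i hi j]

variable [StarRing R]

theorem conjTranspose_one_submatrix_id (e : ι → κ) :
    ((1 : Matrix κ κ R).submatrix id e)ᴴ = (1 : Matrix κ κ R).submatrix e id := by
  rw [Matrix.conjTranspose_submatrix, Matrix.conjTranspose_one]

theorem conjTranspose_one_submatrix_id_mul_mul [Fintype κ] (A : Matrix κ κ R) (e : ι → κ) :
    ((1 : Matrix κ κ R).submatrix id e)ᴴ * A * (1 : Matrix κ κ R).submatrix id e =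
      A.submatrix e e := by
  rw [mul_one_submatrix_id, conjTranspose_one_submatrix_id]
  ext i j
  simp [Matrix.mul_apply, Matrix.one_apply]

theorem conjTranspose_one_submatrix_id_mul_self [Fintype κ] [DecidableEq ι] {e : ι → κ}
    (he : Function.Injective e) :
    ((1 : Matrix κ κ R).submatrix id e)ᴴ * (1 : Matrix κ κ R).submatrix id e = 1 := by
  rw [mul_one_submatrix_id, conjTranspose_one_submatrix_id, Matrix.submatrix_submatrix]
  simpa using Matrix.submatrix_one (α := R) e he

theorem one_submatrix_id_mul_conjTranspose_self [Fintype ι] {e : ι → κ}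
    (he : Function.Injective e) (p : κ → Prop) [DecidablePred p]
    (hp : ∀ i, p i ↔ i ∈ Set.range e) :
    (1 : Matrix κ κ R).submatrix id e * ((1 : Matrix κ κ R).submatrix id e)ᴴ =
      Matrix.diagonal fun i => if p i then 1 else 0 := by
  ext i j
  rw [conjTranspose_one_submatrix_id, Matrix.mul_apply, Matrix.diagonal_apply]
  by_cases hi : p i
  · obtain ⟨ℓ, rfl⟩ := (hp _).mp hi
    rw [Fintype.sum_eq_single ℓ fun ℓ' hℓ' => by simp [Matrix.one_apply, he.ne hℓ'.symm]]
    simp [Matrix.one_apply, hi]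
  · have hne : ∀ ℓ, i ≠ e ℓ := fun ℓ h => hi ((hp i).mpr ⟨ℓ, h.symm⟩)
    simp [Matrix.one_apply, hi, hne]

theorem conjTranspose_submatrix_mul_submatrix_mul_submatrix [Fintype κ] [Fintype ι]
    [DecidableEq ι] {T M : Matrix κ κ R} {e : ι → κ} (he : Function.Injective e)
    (hTM : Tᴴ * M * T = (1 : Matrix κ κ R).submatrix id e * ((1 : Matrix κ κ R).submatrix id e)ᴴ)
    (hT : ∀ i ∉ Set.range e, ∀ j, T i (e j) = 0) :
    (T.submatrix e e)ᴴ * M.submatrix e e * T.submatrix e e = 1 := by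
  set E := (1 : Matrix κ κ R).submatrix id e with hE
  calc (T.submatrix e e)ᴴ * M.submatrix e e * T.submatrix e e
      = (E * T.submatrix e e)ᴴ * M * (E * T.submatrix e e) := by
        rw [← conjTranspose_one_submatrix_id_mul_mul M e]
        simp only [Matrix.conjTranspose_mul, Matrix.mul_assoc, ← hE]
    _ = (T * E)ᴴ * M * (T * E) := by rw [one_submatrix_id_mul_submatrix he hT, mul_one_submatrix_id]
    _ = Eᴴ * (Tᴴ * M * T) * E := by simp only [Matrix.conjTranspose_mul, Matrix.mul_assoc]
    _ = (Eᴴ * E) * (Eᴴ * E) := by rw [hTM]; simp only [Matrix.mul_assoc]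
    _ = 1 := by rw [conjTranspose_one_submatrix_id_mul_self he, one_mul]

end Selection

section inner2

variable {μ : Measure (Fin d → ℂ)}

theorem inner2_swap (f g : MvPolynomial (Fin d) ℂ) :
    inner2 μ g f = starRingEnd ℂ (inner2 μ f g) := by
  rw [inner2, inner2, ← integral_conj]
  simp [mul_comm]

theorem inner2_smul_left (c : ℂ) (f g : MvPolynomial (Fin d) ℂ) :
    inner2 μ (c • f) g = c * inner2 μ f g := by
  simp only [inner2, smul_eval, mul_assoc, integral_const_mul]

theorem inner2_smul_right (c : ℂ) (f g : MvPolynomial (Fin d) ℂ) :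
    inner2 μ f (c • g) = starRingEnd ℂ c * inner2 μ f g := by
  rw [inner2_swap, inner2_smul_left, map_mul, ← inner2_swap]

theorem inner2_sub_left (hμ : PolyIntegrable μ) (f₁ f₂ g : MvPolynomial (Fin d) ℂ) :
    inner2 μ (f₁ - f₂) g = inner2 μ f₁ g - inner2 μ f₂ g := by
  simp only [inner2, eval_sub, sub_mul, integral_sub (hμ f₁ g) (hμ f₂ g)]

theorem inner2_sum_left (hμ : PolyIntegrable μ) {ι : Type*} (s : Finset ι)
    (f : ι → MvPolynomial (Fin d) ℂ) (g : MvPolynomial (Fin d) ℂ) :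
    inner2 μ (∑ i ∈ s, f i) g = ∑ i ∈ s, inner2 μ (f i) g := by
  simp only [inner2, map_sum, Finset.sum_mul, integral_finsetSum s fun i _ => hμ (f i) g]

theorem inner2_sum_right (hμ : PolyIntegrable μ) {ι : Type*} (s : Finset ι)
    (f : MvPolynomial (Fin d) ℂ) (g : ι → MvPolynomial (Fin d) ℂ) :
    inner2 μ f (∑ i ∈ s, g i) = ∑ i ∈ s, inner2 μ f (g i) := by
  rw [inner2_swap, inner2_sum_left hμ, map_sum]
  simp only [← inner2_swap]

theorem inner2_self_eq_integral_normSq (f : MvPolynomial (Fin d) ℂ) :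
    inner2 μ f f = ((∫ z, Complex.normSq (eval z f) ∂μ : ℝ) : ℂ) := by
  simp only [inner2, Complex.mul_conj, integral_complex_ofReal]

theorem inner2_self_eq_norm2_sq (f : MvPolynomial (Fin d) ℂ) :
    inner2 μ f f = ((norm2 μ f ^ 2 : ℝ) : ℂ) := by
  rw [norm2, inner2_self_eq_integral_normSq, Complex.ofReal_re,
    Real.sq_sqrt (integral_nonneg fun z => Complex.normSq_nonneg _)]

theorem inner2_eq_zero_of_inner2_self_eq_zero (hμ : PolyIntegrable μ)
    {f : MvPolynomial (Fin d) ℂ} (hf : inner2 μ f f = 0) (g : MvPolynomial (Fin d) ℂ) :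
    inner2 μ g f = 0 := by
  rw [inner2_self_eq_integral_normSq, Complex.ofReal_eq_zero] at hf
  have hint : Integrable (fun z => Complex.normSq (eval z f)) μ := by
    simpa [Complex.mul_conj] using (hμ f f).re
  have hae := (integral_eq_zero_iff_of_nonneg (fun z => Complex.normSq_nonneg _) hint).mp hf
  rw [inner2, integral_eq_zero_of_ae]
  filter_upwards [hae] with z hz
  simp_all

end inner2

/-- A residual of norm zero drops out of all later steps, because `x / 0 = 0` in `ℂ`. -/
noncomputable def gramSchmidtPoly (μ : Measure (Fin d → ℂ)) (α : ℕ → (Fin d →₀ ℕ)) :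
    ℕ → MvPolynomial (Fin d) ℂ
  | i => monomial (α i) 1 - ∑ j : Fin i,
      (inner2 μ (monomial (α i) 1) (gramSchmidtPoly μ α j) /
        inner2 μ (gramSchmidtPoly μ α j) (gramSchmidtPoly μ α j)) • gramSchmidtPoly μ α j

def IsPivot (μ : Measure (Fin d → ℂ)) (α : ℕ → (Fin d →₀ ℕ)) (i : ℕ) : Prop :=
  inner2 μ (gramSchmidtPoly μ α i) (gramSchmidtPoly μ α i) ≠ 0

section GramSchmidt

variable {μ : Measure (Fin d → ℂ)} {α : ℕ → (Fin d →₀ ℕ)}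

theorem inner2_gramSchmidtPoly_of_lt (hμ : PolyIntegrable μ) {i j : ℕ} (hji : j < i) :
    inner2 μ (gramSchmidtPoly μ α i) (gramSchmidtPoly μ α j) = 0 := by
  induction i using Nat.strong_induction_on generalizing j with
  | _ i ih =>
    by_cases hj : IsPivot μ α j
    · rw [gramSchmidtPoly, inner2_sub_left hμ, inner2_sum_left hμ,
        Finset.sum_eq_single (⟨j, hji⟩ : Fin i), inner2_smul_left, div_mul_cancel₀ _ hj, sub_self]
      · intro k _ hkj
        rw [inner2_smul_left, mul_eq_zero]
        right
        rcases lt_or_gt_of_ne (Fin.val_ne_of_ne hkj) with hk | hk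
        · rw [inner2_swap, ih j hji hk, map_zero]
        · exact ih k k.2 hk
      · simp
    · exact inner2_eq_zero_of_inner2_self_eq_zero hμ (not_not.mp hj) _

theorem coeff_gramSchmidtPoly_ne_zero (hα : Function.Injective α) {i t : ℕ}
    (h : coeff (α t) (gramSchmidtPoly μ α i) ≠ 0) : t = i ∨ t < i ∧ IsPivot μ α t := by
  induction i using Nat.strong_induction_on with
  | _ i ih =>
    rcases eq_or_ne t i with rfl | hti
    · exact Or.inl rfl
    rw [gramSchmidtPoly, coeff_sub, coeff_monomial, if_neg (hα.ne hti.symm), zero_sub,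
      neg_ne_zero, coeff_sum] at h
    obtain ⟨k, -, hk⟩ := Finset.exists_ne_zero_of_sum_ne_zero h
    rw [coeff_smul, smul_eq_mul, mul_ne_zero_iff] at hk
    have hkpiv : IsPivot μ α k := fun h0 => hk.1 (by rw [h0, div_zero])
    rcases ih k k.2 hk.2 with rfl | ⟨htk, htpiv⟩
    · exact Or.inr ⟨k.2, hkpiv⟩
    · exact Or.inr ⟨htk.trans k.2, htpiv⟩

theorem coeff_gramSchmidtPoly_self (hα : Function.Injective α) (i : ℕ) :
    coeff (α i) (gramSchmidtPoly μ α i) = 1 := by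
  rw [gramSchmidtPoly, coeff_sub, coeff_monomial, if_pos rfl, coeff_sum,
    Finset.sum_eq_zero, sub_zero]
  intro k _
  rw [coeff_smul, smul_eq_mul, mul_eq_zero]
  right
  by_contra h
  rcases coeff_gramSchmidtPoly_ne_zero hα h with h' | ⟨h', -⟩ <;> omega

end GramSchmidt

open scoped Classical in
noncomputable def gramSchmidtNormedPoly (μ : Measure (Fin d → ℂ)) (α : ℕ → (Fin d →₀ ℕ))
    (i : ℕ) : MvPolynomial (Fin d) ℂ :=
  (if IsPivot μ α i then ((norm2 μ (gramSchmidtPoly μ α i))⁻¹ : ℂ) else 1) •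
    gramSchmidtPoly μ α i

section GramSchmidtNormed

variable {μ : Measure (Fin d → ℂ)} {α : ℕ → (Fin d →₀ ℕ)}

theorem norm2_gramSchmidtPoly_ne_zero {i : ℕ} (hi : IsPivot μ α i) :
    norm2 μ (gramSchmidtPoly μ α i) ≠ 0 := by
  intro h
  apply hi
  rw [inner2_self_eq_norm2_sq, h]
  simp

theorem inner2_gramSchmidtNormedPoly [DecidablePred (IsPivot μ α)] (hμ : PolyIntegrable μ)
    (i j : ℕ) :
    inner2 μ (gramSchmidtNormedPoly μ α i) (gramSchmidtNormedPoly μ α j) =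
      if i = j ∧ IsPivot μ α i then 1 else 0 := by
  rw [gramSchmidtNormedPoly, gramSchmidtNormedPoly, inner2_smul_left, inner2_smul_right]
  rcases lt_trichotomy i j with hij | rfl | hij
  · simp [inner2_swap (gramSchmidtPoly μ α j), inner2_gramSchmidtPoly_of_lt hμ hij, hij.ne]
  · by_cases hi : IsPivot μ α i
    · have hn : (norm2 μ (gramSchmidtPoly μ α i) : ℂ) ≠ 0 :=
        Complex.ofReal_ne_zero.mpr (norm2_gramSchmidtPoly_ne_zero hi)
      simp only [hi, and_self, if_true, inner2_self_eq_norm2_sq, map_inv₀, Complex.conj_ofReal]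
      push_cast
      field_simp
    · simp [hi, not_not.mp hi]
  · simp [inner2_gramSchmidtPoly_of_lt hμ hij, hij.ne']

theorem coeff_gramSchmidtNormedPoly_ne_zero (hα : Function.Injective α) {i t : ℕ}
    (h : coeff (α t) (gramSchmidtNormedPoly μ α i) ≠ 0) : t = i ∨ t < i ∧ IsPivot μ α t := by
  rw [gramSchmidtNormedPoly, coeff_smul, smul_eq_mul] at h
  exact coeff_gramSchmidtPoly_ne_zero hα (right_ne_zero_of_mul h)

theorem coeff_gramSchmidtNormedPoly_self_ne_zero (hα : Function.Injective α) (i : ℕ) :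
    coeff (α i) (gramSchmidtNormedPoly μ α i) ≠ 0 := by
  rw [gramSchmidtNormedPoly, coeff_smul, coeff_gramSchmidtPoly_self hα, smul_eq_mul, mul_one]
  split_ifs with hi
  · exact inv_ne_zero (Complex.ofReal_ne_zero.mpr (norm2_gramSchmidtPoly_ne_zero hi))
  · exact one_ne_zero

theorem degEq_gramSchmidtNormedPoly (hα : Function.Injective α) (i : ℕ) :
    DegEq α (gramSchmidtNormedPoly μ α i) i :=
  ⟨fun t ht => by rcases coeff_gramSchmidtNormedPoly_ne_zero hα ht with h | h <;> omega,
    coeff_gramSchmidtNormedPoly_self_ne_zero hα i⟩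

end GramSchmidtNormed

noncomputable def gramSchmidtCoeffMatrix (μ : Measure (Fin d → ℂ)) (α : ℕ → (Fin d →₀ ℕ))
    (k : ℕ) : Matrix (Fin (k + 1)) (Fin (k + 1)) ℂ :=
  Matrix.of fun t i => coeff (α t) (gramSchmidtNormedPoly μ α i)

section CoeffMatrix

variable {μ : Measure (Fin d → ℂ)} {α : ℕ → (Fin d →₀ ℕ)}

theorem sum_monomial_coeff_of_degLE (hα : Function.Bijective α) {q : MvPolynomial (Fin d) ℂ}
    {k : ℕ} (hq : DegLE α q k) :
    ∑ t : Fin (k + 1), monomial (α t) (coeff (α t) q) = q := by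
  rw [← Finset.sum_image (f := fun v => monomial v (coeff v q))
    fun s _ t _ h => Fin.ext (hα.1 h)]
  conv_rhs => rw [q.as_sum]
  refine (Finset.sum_subset (fun v hv => ?_) fun v _ hv => ?_).symm
  · obtain ⟨t, rfl⟩ := hα.2 v
    exact Finset.mem_image.mpr ⟨⟨t, Nat.lt_succ_of_le (hq t (mem_support_iff.mp hv))⟩,
      Finset.mem_univ _, rfl⟩
  · rw [notMem_support_iff.mp hv, monomial_zero]

theorem inner2_sum_monomial (hμ : PolyIntegrable μ) {k : ℕ} (a b : Fin (k + 1) → ℂ) :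
    inner2 μ (∑ t : Fin (k + 1), monomial (α t) (a t))
        (∑ s : Fin (k + 1), monomial (α s) (b s)) =
      star b ⬝ᵥ (momentMatrix μ α k *ᵥ a) := by
  have hm (v : Fin d →₀ ℕ) (c : ℂ) : monomial v c = c • monomial v 1 := by
    rw [smul_monomial, smul_eq_mul, mul_one]
  simp only [inner2_sum_left hμ, inner2_sum_right hμ, hm _ (a _), hm _ (b _), inner2_smul_left,
    inner2_smul_right, dotProduct, mulVec, momentMatrix, Matrix.of_apply, Finset.mul_sum]
  rw [Finset.sum_comm]
  refine Finset.sum_congr rfl fun s _ => Finset.sum_congr rfl fun t _ => ?_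
  rw [Pi.star_apply, starRingEnd_apply]
  ring

theorem sum_monomial_gramSchmidtCoeffMatrix (hα : Function.Bijective α) {k : ℕ}
    (i : Fin (k + 1)) :
    ∑ t : Fin (k + 1), monomial (α t) (gramSchmidtCoeffMatrix μ α k t i) =
      gramSchmidtNormedPoly μ α i :=
  sum_monomial_coeff_of_degLE hα fun _ ht =>
    ((degEq_gramSchmidtNormedPoly hα.1 i).1 _ ht).trans (Nat.lt_succ_iff.mp i.2)

theorem isUpperTriangular_gramSchmidtCoeffMatrix (hα : Function.Injective α) (k : ℕ) :
    (gramSchmidtCoeffMatrix μ α k).IsUpperTriangular := fun t i hit => by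
  by_contra h
  rcases coeff_gramSchmidtNormedPoly_ne_zero hα h with h' | ⟨h', -⟩
  · exact hit.ne (Fin.ext h').symm
  · exact lt_asymm hit h'

theorem isUnit_gramSchmidtCoeffMatrix (hα : Function.Injective α) (k : ℕ) :
    IsUnit (gramSchmidtCoeffMatrix μ α k) := by
  rw [Matrix.isUnit_iff_isUnit_det,
    Matrix.det_of_isUpperTriangular (isUpperTriangular_gramSchmidtCoeffMatrix hα k),
    isUnit_iff_ne_zero, Finset.prod_ne_zero_iff]
  exact fun i _ => coeff_gramSchmidtNormedPoly_self_ne_zero hα i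

theorem conjTranspose_gramSchmidtCoeffMatrix_mul_momentMatrix_mul
    [DecidablePred (IsPivot μ α)] (hμ : PolyIntegrable μ)
    (hα : Function.Bijective α) (k : ℕ) :
    (gramSchmidtCoeffMatrix μ α k)ᴴ * momentMatrix μ α k * gramSchmidtCoeffMatrix μ α k =
      Matrix.diagonal fun i : Fin (k + 1) => if IsPivot μ α i then 1 else 0 := by
  ext i j
  have h := inner2_sum_monomial (α := α) hμ (fun t => gramSchmidtCoeffMatrix μ α k t j)
    (fun t => gramSchmidtCoeffMatrix μ α k t i)
  rw [sum_monomial_gramSchmidtCoeffMatrix hα, sum_monomial_gramSchmidtCoeffMatrix hα,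
    inner2_gramSchmidtNormedPoly hμ] at h
  rw [Matrix.mul_mul_apply, Matrix.diagonal_apply]
  refine h.symm.trans ?_
  by_cases hij : i = j
  · subst hij; simp
  · simp [hij, Fin.val_ne_of_ne (Ne.symm hij)]

open scoped Count in
theorem rank_momentMatrix [DecidablePred (IsPivot μ α)] (hμ : PolyIntegrable μ)
    (hα : Function.Bijective α) (k : ℕ) :
    (momentMatrix μ α k).rank = Nat.count (IsPivot μ α) (k + 1) := by
  have hR := (Matrix.isUnit_iff_isUnit_det _).mp (isUnit_gramSchmidtCoeffMatrix (μ := μ) hα.1 k)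
  have hRH : IsUnit (gramSchmidtCoeffMatrix μ α k)ᴴ.det := by
    rw [Matrix.det_conjTranspose]; exact hR.star
  rw [← Matrix.rank_mul_eq_left_of_isUnit_det _ _ hR,
    ← Matrix.rank_mul_eq_right_of_isUnit_det _ _ hRH, ← Matrix.mul_assoc,
    conjTranspose_gramSchmidtCoeffMatrix_mul_momentMatrix_mul hμ hα, Matrix.rank_diagonal,
    Nat.count_eq_card_fintype]
  exact Fintype.card_congr
    { toFun := fun i => ⟨i.1, i.1.2, by simpa using i.2⟩
      invFun := fun m => ⟨⟨m.1, m.2.1⟩, by simpa using m.2.2⟩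
      left_inv := fun _ => rfl
      right_inv := fun _ => rfl }

end CoeffMatrix

section Pivots

variable {μ : Measure (Fin d → ℂ)} {α : ℕ → (Fin d →₀ ℕ)}

theorem kdeg_eq_nth [DecidablePred (IsPivot μ α)] (hμ : PolyIntegrable μ)
    (hα : Function.Bijective α) {n N : ℕ} (hn : n < Nat.count (IsPivot μ α) N) :
    kdeg μ α n = Nat.nth (IsPivot μ α) n := by
  have hnth := count_nth_succ_of_lt_count hn
  simp only [kdeg, rank_momentMatrix hμ hα]
  refine le_antisymm (Nat.sInf_le hnth) (le_csInf ⟨_, hnth⟩ fun k hk => ?_)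
  exact Nat.lt_succ_iff.mp (Nat.nth_lt_of_lt_count (hk.symm ▸ Nat.lt_succ_self n))

theorem isPivot_zero [IsFiniteMeasure μ] (hμ : μ ≠ 0) (hα : α 0 = 0) : IsPivot μ α 0 := by
  have h1 : gramSchmidtPoly μ α 0 = 1 := by
    rw [gramSchmidtPoly, hα, Finset.univ_eq_empty, Finset.sum_empty, sub_zero]
    rfl
  rw [IsPivot, h1, inner2_self_eq_integral_normSq]
  simpa [Measure.real] using (ENNReal.toReal_pos (Measure.measure_univ_ne_zero.mpr hμ)
    (measure_ne_top μ _)).ne'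

theorem Emat_eq_one_submatrix (n : ℕ) (e : Fin (n + 1) → Fin (kdeg μ α n + 1))
    (he : ∀ ℓ, (e ℓ : ℕ) = kdeg μ α ℓ) :
    Emat μ α n = (1 : Matrix (Fin (kdeg μ α n + 1)) (Fin (kdeg μ α n + 1)) ℂ).submatrix id e := by
  ext i ℓ
  simp [Emat, Matrix.one_apply, Fin.ext_iff, he]

theorem exists_pivot_embedding [DecidablePred (IsPivot μ α)] {n N : ℕ}
    (hn : n < Nat.count (IsPivot μ α) N)
    (hkdeg : ∀ m ≤ n, kdeg μ α m = Nat.nth (IsPivot μ α) m) :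
    ∃ e : Fin (n + 1) → Fin (kdeg μ α n + 1), (∀ ℓ, (e ℓ : ℕ) = kdeg μ α ℓ) ∧ StrictMono e ∧
      ∀ i : Fin (kdeg μ α n + 1), IsPivot μ α i ↔ i ∈ Set.range e := by
  have hkdeg' (ℓ : Fin (n + 1)) : kdeg μ α ℓ = Nat.nth (IsPivot μ α) ℓ :=
    hkdeg ℓ (Nat.lt_succ_iff.mp ℓ.2)
  refine ⟨fun ℓ => ⟨kdeg μ α ℓ, ?_⟩, fun _ => rfl, fun a b hab => ?_, fun i => ⟨fun hi => ?_, ?_⟩⟩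
  · rw [hkdeg', hkdeg n le_rfl, Nat.lt_succ_iff]
    rcases (Nat.lt_succ_iff.mp ℓ.2).lt_or_eq with h | h
    · exact (nth_lt_nth_of_lt_count h hn).le
    · rw [h]
  · simp only [Fin.mk_lt_mk, hkdeg']
    exact nth_lt_nth_of_lt_count hab ((Nat.lt_succ_iff.mp b.2).trans_lt hn)
  · obtain ⟨ℓ, hℓ, hℓi⟩ := exists_nth_eq_of_le_nth hn hi (hkdeg n le_rfl ▸ Nat.lt_succ_iff.mp i.2)
    exact ⟨⟨ℓ, Nat.lt_succ_of_le hℓ⟩, Fin.ext ((hkdeg ℓ hℓ).trans hℓi)⟩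
  · rintro ⟨ℓ, rfl⟩
    simpa [hkdeg'] using nth_mem_of_lt_count ((Nat.lt_succ_iff.mp ℓ.2).trans_lt hn)

theorem exists_triangular_factorization [DecidablePred (IsPivot μ α)] (hμ : PolyIntegrable μ)
    (hα : Function.Bijective α) {n N : ℕ} (hn : n < Nat.count (IsPivot μ α) N)
    (hkdeg : ∀ m ≤ n, kdeg μ α m = Nat.nth (IsPivot μ α) m) :
    ∃ Rt : Matrix (Fin (kdeg μ α n + 1)) (Fin (kdeg μ α n + 1)) ℂ,
        IsUnit Rt ∧ Rt.BlockTriangular id ∧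
        Rtᴴ * momentMatrix μ α (kdeg μ α n) * Rt = Emat μ α n * (Emat μ α n)ᴴ ∧
        IsUnit ((Emat μ α n)ᴴ * momentMatrix μ α (kdeg μ α n) * Emat μ α n) ∧
        (momentMatrix μ α (kdeg μ α n)).rank = n + 1 ∧
        ((Emat μ α n)ᴴ * Rt * Emat μ α n).BlockTriangular id ∧
        IsUnit ((Emat μ α n)ᴴ * Rt * Emat μ α n) ∧
        ((Emat μ α n)ᴴ * Rt * Emat μ α n)ᴴ *
            ((Emat μ α n)ᴴ * momentMatrix μ α (kdeg μ α n) * Emat μ α n) *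
            ((Emat μ α n)ᴴ * Rt * Emat μ α n) = 1 ∧
        ∀ j : Fin (n + 1),
          gramSchmidtNormedPoly μ α (kdeg μ α j) = ∑ i : Fin (kdeg μ α n + 1),
            monomial (α (i : ℕ)) ((Emat μ α n * ((Emat μ α n)ᴴ * Rt * Emat μ α n)) i j) := by
  obtain ⟨e, he_val, he, hrange⟩ := exists_pivot_embedding hn hkdeg
  set R := gramSchmidtCoeffMatrix μ α (kdeg μ α n)
  rw [Emat_eq_one_submatrix n e he_val]
  set E := (1 : Matrix (Fin (kdeg μ α n + 1)) (Fin (kdeg μ α n + 1)) ℂ).submatrix id e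
  have hfac : Rᴴ * momentMatrix μ α (kdeg μ α n) * R = E * Eᴴ := by
    rw [conjTranspose_gramSchmidtCoeffMatrix_mul_momentMatrix_mul hμ hα,
      one_submatrix_id_mul_conjTranspose_self he.injective _ hrange]
  have hbad : ∀ i ∉ Set.range e, ∀ j, R i (e j) = 0 := fun i hi j => by
    by_contra h
    rcases coeff_gramSchmidtNormedPoly_ne_zero hα.1 h with h' | ⟨-, h'⟩
    · exact hi ⟨j, Fin.ext h'.symm⟩
    · exact hi ((hrange i).mp h')
  have hX := conjTranspose_submatrix_mul_submatrix_mul_submatrix he.injective hfac hbad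
  simp only [E, conjTranspose_one_submatrix_id_mul_mul]
  refine ⟨R, isUnit_gramSchmidtCoeffMatrix hα.1 _, isUpperTriangular_gramSchmidtCoeffMatrix hα.1 _,
    hfac, (isUnit_of_conjTranspose_mul_mul_eq_one hX).1, ?_,
    fun a b hab => isUpperTriangular_gramSchmidtCoeffMatrix hα.1 _ (he hab),
    (isUnit_of_conjTranspose_mul_mul_eq_one hX).2, hX, fun j => ?_⟩
  · rw [rank_momentMatrix hμ hα, hkdeg n le_rfl, count_nth_succ_of_lt_count hn]
  · rw [one_submatrix_id_mul_submatrix he.injective hbad, ← he_val]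
    exact (sum_monomial_gramSchmidtCoeffMatrix hα (e j)).symm

end Pivots

/-- Existence of multivariate orthonormal polynomials with the prescribed degrees,
together with the triangular factorization of the moment matrix. -/
theorem statement0 (μ : Measure (Fin d → ℂ)) [IsFiniteMeasure μ]
    (hμ0 : μ ≠ 0) (hμc : IsCompact (msupport μ))
    (α : ℕ → (Fin d →₀ ℕ)) (hα : AdmissibleEnum α)
    (n : ℕ) (hn : ∃ k : ℕ, n + 1 ≤ (momentMatrix μ α k).rank) :
    kdeg μ α 0 = 0 ∧
    ∃ p : ℕ → MvPolynomial (Fin d) ℂ,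
      (∀ i ≤ n, ∀ j ≤ n, inner2 μ (p i) (p j) = if i = j then 1 else 0) ∧
      (∀ m ≤ n, DegEq α (p m) (kdeg μ α m)) ∧
      ∃ Rt : Matrix (Fin (kdeg μ α n + 1)) (Fin (kdeg μ α n + 1)) ℂ,
        IsUnit Rt ∧ Rt.BlockTriangular id ∧
        Rtᴴ * momentMatrix μ α (kdeg μ α n) * Rt = Emat μ α n * (Emat μ α n)ᴴ ∧
        IsUnit ((Emat μ α n)ᴴ * momentMatrix μ α (kdeg μ α n) * Emat μ α n) ∧
        (momentMatrix μ α (kdeg μ α n)).rank = n + 1 ∧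
        ((Emat μ α n)ᴴ * Rt * Emat μ α n).BlockTriangular id ∧
        IsUnit ((Emat μ α n)ᴴ * Rt * Emat μ α n) ∧
        ((Emat μ α n)ᴴ * Rt * Emat μ α n)ᴴ *
            ((Emat μ α n)ᴴ * momentMatrix μ α (kdeg μ α n) * Emat μ α n) *
            ((Emat μ α n)ᴴ * Rt * Emat μ α n) = 1 ∧
        ∀ j : Fin (n + 1),
          p (j : ℕ) = ∑ i : Fin (kdeg μ α n + 1),
            MvPolynomial.monomial (α (i : ℕ))
              ((Emat μ α n * ((Emat μ α n)ᴴ * Rt * Emat μ α n)) i j) := by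
  classical
  obtain ⟨hαb, hα0, -⟩ := hα
  have hμ := polyIntegrable_of_isCompact_msupport hμc
  obtain ⟨K, hK⟩ := hn
  rw [rank_momentMatrix hμ hαb] at hK
  have hcount (m : ℕ) (hm : m ≤ n) : m < Nat.count (IsPivot μ α) (K + 1) := by omega
  have hkdeg (m : ℕ) (hm : m ≤ n) : kdeg μ α m = Nat.nth (IsPivot μ α) m :=
    kdeg_eq_nth hμ hαb (hcount m hm)
  refine ⟨(hkdeg 0 n.zero_le).trans (Nat.nth_zero_of_zero (isPivot_zero hμ0 hα0)),
    fun m => gramSchmidtNormedPoly μ α (kdeg μ α m), fun i hi j hj => ?_,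
    fun m _ => degEq_gramSchmidtNormedPoly hαb.1 _,
    exists_triangular_factorization hμ hαb (hcount n le_rfl) hkdeg⟩
  rw [inner2_gramSchmidtNormedPoly hμ, hkdeg i hi, hkdeg j hj]
  rcases lt_trichotomy i j with hij | rfl | hij
  · simp [(nth_lt_nth_of_lt_count hij (hcount j hj)).ne, hij.ne]
  · simp [nth_mem_of_lt_count (hcount i hi)]
  · simp [(nth_lt_nth_of_lt_count hij (hcount i hi)).ne', hij.ne']

end CD
end

section
/- For all n ∈ ℕ and all z ∈ ℂ^d, 1/√(K_n^μ(z,z)) = min{‖p‖_{2,μ} : p ∈ ℒ_n(μ), p(z) = 1}. Moreover, for all k, n ∈ ℕ with k_n^μ ≤ k < k_{n+1}^μ and all z ∈ 𝒮_{n+1}(μ), 1/√(K_n^μ(z,z)) = min{‖p‖_{2,μ} : p a polynomial of degree ≤ k with p(z) = 1}. -/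
/-!
Embed polynomials into `L²(μ)` (possible since `supp μ` is compact). The moment matrix `M̃_k(μ)`
is the Gram matrix of `z^{α(0)}, …, z^{α(k)}` there, so its rank is the dimension of their span;
that rank grows by at most one at each step, hence `k_n` is the first `k` at which it reaches
`n + 1`.

The polynomial `K_n(·, z)` reproduces evaluation at `z` on `ℒ_n(μ)`, so by Cauchy–Schwarz every
`q` with `⟨q, K_n(·, z)⟩ = 1` has `‖q‖ ≥ K_n(z, z)^{-1/2}`, with equality for
`K_n(·, z) / K_n(z, z)`. For `k_n ≤ k < k_{n+1}` the span of the monomials up to `α(k)` has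
dimension `n + 1`, so it is spanned by `p_0, …, p_n`: a polynomial of degree `≤ k` differs from an
element of `ℒ_n(μ)` by a polynomial vanishing on `supp μ` of degree `< k_{n+1}`, which vanishes on
`𝒮_{n+1}(μ)`, and the reproducing identity persists there.
-/

open MeasureTheory Matrix Finset

namespace CD

variable {d : ℕ}

open MvPolynomial

lemma measure_compl_msupport (μ : Measure (Fin d → ℂ)) : μ (msupport μ)ᶜ = 0 := by
  obtain ⟨T, hTc, hTsub, hTU⟩ :=
    TopologicalSpace.isOpen_sUnion_countable {U : Set (Fin d → ℂ) | IsOpen U ∧ μ U = 0}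
      fun _ hU => hU.1
  have hcompl : (msupport μ)ᶜ = ⋃₀ T := by
    ext x
    simp only [hTU, msupport, Set.mem_compl_iff, Set.mem_ofPred_eq, Set.mem_sUnion, not_forall,
      not_not]
    exact ⟨fun ⟨U, hxU, hU, hμU⟩ => ⟨U, ⟨hU, hμU⟩, hxU⟩,
      fun ⟨U, ⟨hU, hμU⟩, hxU⟩ => ⟨U, hxU, hU, hμU⟩⟩
  rw [hcompl, measure_sUnion_null_iff hTc]
  exact fun U hU => (hTsub hU).2

lemma eq_zero_on_msupport_of_ae {μ : Measure (Fin d → ℂ)} {f : (Fin d → ℂ) → ℂ}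
    (hf : Continuous f) (h : f =ᵐ[μ] 0) {z : Fin d → ℂ} (hz : z ∈ msupport μ) : f z = 0 := by
  by_contra hne
  exact hz {w | f w ≠ 0} hne (isOpen_ne.preimage hf) (ae_iff.1 h)

section L2

variable {μ : Measure (Fin d → ℂ)} [IsFiniteMeasure μ]

lemma memLp_eval (hμc : IsCompact (msupport μ)) (f : MvPolynomial (Fin d) ℂ) (r : ENNReal) :
    MemLp (fun z => eval z f) r μ := by
  obtain ⟨C, hC⟩ := hμc.exists_bound_of_continuousOn f.continuous_eval.continuousOn
  refine .of_bound f.continuous_eval.aestronglyMeasurable C ?_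
  filter_upwards [measure_compl_msupport μ] with z hz using hC z hz

noncomputable def toL2 (hμc : IsCompact (msupport μ)) :
    MvPolynomial (Fin d) ℂ →ₗ[ℂ] Lp ℂ 2 μ where
  toFun f := (memLp_eval hμc f 2).toLp
  map_add' f g := by
    simp only [map_add]
    exact MemLp.toLp_add _ _
  map_smul' c f := by
    simp only [smul_eval, RingHom.id_apply]
    exact MemLp.toLp_const_smul c _

lemma coeFn_toL2 (hμc : IsCompact (msupport μ)) (f : MvPolynomial (Fin d) ℂ) :
    toL2 hμc f =ᵐ[μ] fun z => eval z f :=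
  MemLp.coeFn_toLp (memLp_eval hμc f 2)

lemma inner2_eq_inner (hμc : IsCompact (msupport μ)) (f g : MvPolynomial (Fin d) ℂ) :
    inner2 μ f g = inner ℂ (toL2 hμc g) (toL2 hμc f) := by
  rw [L2.inner_def, inner2]
  refine integral_congr_ae ?_
  filter_upwards [coeFn_toL2 hμc f, coeFn_toL2 hμc g] with z hf hg
  simp [hf, hg]

lemma norm2_eq_norm (hμc : IsCompact (msupport μ)) (f : MvPolynomial (Fin d) ℂ) :
    norm2 μ f = ‖toL2 hμc f‖ := by
  rw [norm2, inner2_eq_inner hμc, inner_self_eq_norm_sq_to_K]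
  norm_cast
  exact Real.sqrt_sq (norm_nonneg _)

lemma mem_Nideal_of_toL2_eq_zero (hμc : IsCompact (msupport μ)) {f : MvPolynomial (Fin d) ℂ}
    (hf : toL2 hμc f = 0) : f ∈ Nideal μ := by
  have hae : (fun z => eval z f) =ᵐ[μ] 0 := by
    filter_upwards [coeFn_toL2 hμc f, Lp.coeFn_zero ℂ 2 μ] with z h h0
    rw [← h, hf, h0]
  exact fun z hz => eq_zero_on_msupport_of_ae f.continuous_eval hae hz

end L2

section Gram

variable {𝕜 E ι : Type*} [RCLike 𝕜] [NormedAddCommGroup E] [InnerProductSpace 𝕜 E] [Fintype ι]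

lemma ker_gram_mulVecLin (v : ι → E) :
    LinearMap.ker (gram 𝕜 v).mulVecLin = LinearMap.ker (Fintype.linearCombination 𝕜 v) := by
  ext x
  simp only [LinearMap.mem_ker, mulVecLin_apply, Fintype.linearCombination_apply]
  constructor
  · intro hx
    have h := star_dotProduct_gram_mulVec v x x
    rwa [hx, dotProduct_zero, eq_comm, inner_self_eq_zero] at h
  · intro hx
    ext i
    simp only [mulVec, dotProduct, gram_apply, Pi.zero_apply]
    simp_rw [mul_comm _ (x _), ← inner_smul_right, ← inner_sum, hx, inner_zero_right]

theorem rank_gram (v : ι → E) :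
    (gram 𝕜 v).rank = Module.finrank 𝕜 (Submodule.span 𝕜 (Set.range v)) := by
  have h₁ := LinearMap.finrank_range_add_finrank_ker (gram 𝕜 v).mulVecLin
  have h₂ := LinearMap.finrank_range_add_finrank_ker (Fintype.linearCombination 𝕜 v)
  rw [ker_gram_mulVecLin, ← h₂, Fintype.range_linearCombination] at h₁
  exact Nat.add_right_cancel h₁

end Gram

section Rank

open Module Submodule

variable {μ : Measure (Fin d → ℂ)} {α : ℕ → (Fin d →₀ ℕ)}

lemma rank_momentMatrix_mono : Monotone fun k => (momentMatrix μ α k).rank :=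
  monotone_nat_of_le_succ fun k =>
    rank_submatrix_le (momentMatrix μ α (k + 1)) Fin.castSucc Fin.castSucc

variable [IsFiniteMeasure μ]

lemma kdeg_zero (hμ0 : μ ≠ 0) (hα0 : α 0 = 0) : kdeg μ α 0 = 0 := by
  have : NeZero μ := ⟨hμ0⟩
  have hrank0 : (momentMatrix μ α 0).rank = 0 + 1 := by
    refine rank_of_det_ne_zero ?_
    simp [momentMatrix, inner2, hα0, measureReal_univ_ne_zero]
  exact Nat.le_zero.1 (Nat.sInf_le (s := {k | (momentMatrix μ α k).rank = 0 + 1}) hrank0)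

noncomputable def momentSpan (hμc : IsCompact (msupport μ)) (α : ℕ → (Fin d →₀ ℕ)) (k : ℕ) :
    Submodule ℂ (Lp ℂ 2 μ) :=
  span ℂ (Set.range fun i : Fin (k + 1) => toL2 hμc (monomial (α i) 1))

instance (hμc : IsCompact (msupport μ)) (k : ℕ) : FiniteDimensional ℂ (momentSpan hμc α k) :=
  FiniteDimensional.span_of_finite ℂ (Set.finite_range _)

lemma rank_momentMatrix_s2 (hμc : IsCompact (msupport μ)) (k : ℕ) :
    (momentMatrix μ α k).rank = finrank ℂ (momentSpan hμc α k) := by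
  have hgram : momentMatrix μ α k =
      gram ℂ fun i : Fin (k + 1) => toL2 hμc (monomial (α i) 1) := by
    ext j l
    simp only [momentMatrix, of_apply, gram_apply, inner2_eq_inner hμc]
  rw [hgram, rank_gram, momentSpan]

lemma rank_momentMatrix_succ_le (hμc : IsCompact (msupport μ)) (k : ℕ) :
    (momentMatrix μ α (k + 1)).rank ≤ (momentMatrix μ α k).rank + 1 := by
  set v := toL2 hμc (monomial (α (k + 1)) 1)
  have hle : momentSpan hμc α (k + 1) ≤ momentSpan hμc α k ⊔ ℂ ∙ v := by
    rw [momentSpan, span_le]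
    rintro _ ⟨i, rfl⟩
    induction i using Fin.lastCases with
    | last => exact mem_sup_right (mem_span_singleton_self v)
    | cast i => exact mem_sup_left (subset_span ⟨i, rfl⟩)
  rw [rank_momentMatrix_s2 hμc, rank_momentMatrix_s2 hμc]
  calc _ ≤ _ := finrank_mono hle
    _ ≤ _ := finrank_add_le_finrank_add_finrank _ _
    _ ≤ _ := by
      grw [finrank_span_le_card ({v} : Set (Lp ℂ 2 μ))]
      simp

variable (hμc : IsCompact (msupport μ))
include hμc

lemma exists_rank_momentMatrix_eq {n k : ℕ} (h : n + 1 ≤ (momentMatrix μ α k).rank) :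
    ∃ j ≤ k, (momentMatrix μ α j).rank = n + 1 := by
  induction k with
  | zero =>
    have := rank_le_width (momentMatrix μ α 0)
    exact ⟨0, le_rfl, by omega⟩
  | succ k ih =>
    by_cases hk : n + 1 ≤ (momentMatrix μ α k).rank
    · obtain ⟨j, hj, hjr⟩ := ih hk
      exact ⟨j, by omega, hjr⟩
    · have := rank_momentMatrix_succ_le hμc (α := α) k
      exact ⟨k + 1, le_rfl, by omega⟩

variable (hrank : ∀ m : ℕ, ∃ k : ℕ, m + 1 ≤ (momentMatrix μ α k).rank)
include hrank

lemma rank_momentMatrix_kdeg (n : ℕ) : (momentMatrix μ α (kdeg μ α n)).rank = n + 1 := by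
  obtain ⟨k, hk⟩ := hrank n
  obtain ⟨j, -, hj⟩ := exists_rank_momentMatrix_eq hμc hk
  exact Nat.sInf_mem (s := {k | (momentMatrix μ α k).rank = n + 1}) ⟨j, hj⟩

lemma kdeg_le_iff {n k : ℕ} : kdeg μ α n ≤ k ↔ n + 1 ≤ (momentMatrix μ α k).rank := by
  constructor
  · intro h
    exact (rank_momentMatrix_kdeg hμc hrank n).ge.trans (rank_momentMatrix_mono h)
  · intro h
    obtain ⟨j, hjk, hj⟩ := exists_rank_momentMatrix_eq hμc h
    exact (Nat.sInf_le (s := {k | (momentMatrix μ α k).rank = n + 1}) hj).trans hjk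

lemma kdeg_mono : Monotone (kdeg μ α) :=
  monotone_nat_of_le_succ fun n => by
    rw [kdeg_le_iff hμc hrank, rank_momentMatrix_kdeg hμc hrank]
    omega

lemma rank_momentMatrix_le_of_lt_kdeg {n k : ℕ} (hk : k < kdeg μ α (n + 1)) :
    (momentMatrix μ α k).rank ≤ n + 1 := by
  rw [← not_le, kdeg_le_iff hμc hrank] at hk
  omega

end Rank

section Degree

open Submodule

def degLESubmodule (α : ℕ → (Fin d →₀ ℕ)) (k : ℕ) : Submodule ℂ (MvPolynomial (Fin d) ℂ) where
  carrier := {q | DegLE α q k}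
  add_mem' {f g} hf hg m hm := by
    by_cases h : coeff (α m) f = 0
    · exact hg m (by simpa [h] using hm)
    · exact hf m h
  zero_mem' _ hm := absurd (coeff_zero _) hm
  smul_mem' c f hf m hm := hf m fun h => hm (by rw [coeff_smul, h, smul_zero])

variable {α : ℕ → (Fin d →₀ ℕ)}

lemma degLESubmodule_mono {k k' : ℕ} (h : k ≤ k') : degLESubmodule α k ≤ degLESubmodule α k' :=
  fun _ hq m hm => (hq m hm).trans h

lemma monomial_mem_degLESubmodule (hinj : Function.Injective α) (i : ℕ) (c : ℂ) :
    monomial (α i) c ∈ degLESubmodule α i := by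
  intro m hm
  rw [coeff_monomial] at hm
  exact (hinj (of_not_not fun h => hm (if_neg h))).ge

lemma toL2_mem_momentSpan {μ : Measure (Fin d → ℂ)} [IsFiniteMeasure μ]
    (hμc : IsCompact (msupport μ)) (hsurj : Function.Surjective α) {k : ℕ}
    {q : MvPolynomial (Fin d) ℂ} (hq : q ∈ degLESubmodule α k) :
    toL2 hμc q ∈ momentSpan hμc α k := by
  rw [q.as_sum, map_sum]
  refine sum_mem fun m hm => ?_
  obtain ⟨i, rfl⟩ := hsurj m
  have hi : i < k + 1 := Nat.lt_succ_of_le (hq i (mem_support_iff.1 hm))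
  rw [← mul_one (coeff _ q), ← smul_eq_mul, ← smul_monomial, map_smul]
  exact smul_mem _ _ (subset_span ⟨⟨i, hi⟩, rfl⟩)

end Degree

namespace IsONBasis

open Module Submodule

variable {μ : Measure (Fin d → ℂ)} {α : ℕ → (Fin d →₀ ℕ)} {p : ℕ → MvPolynomial (Fin d) ℂ}

lemma inner2_eq (hp : IsONBasis μ α p) (i j : ℕ) :
    inner2 μ (p i) (p j) = if i = j then 1 else 0 :=
  (hp (max i j)).1 i (le_max_left i j) j (le_max_right i j)

variable [IsFiniteMeasure μ] (hμc : IsCompact (msupport μ))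

lemma orthonormal_toL2 (hp : IsONBasis μ α p) : Orthonormal ℂ fun j => toL2 hμc (p j) := by
  rw [orthonormal_iff_ite]
  intro i j
  rw [← inner2_eq_inner, hp.inner2_eq]
  exact if_congr eq_comm rfl rfl

variable (hrank : ∀ m : ℕ, ∃ k : ℕ, m + 1 ≤ (momentMatrix μ α k).rank)
include hμc hrank

lemma mem_degLESubmodule (hinj : Function.Injective α) (hp : IsONBasis μ α p) (m : ℕ) :
    p m ∈ degLESubmodule α (kdeg μ α m) := by
  obtain ⟨c, -, -, hpm⟩ := (hp m).2 m le_rfl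
  rw [hpm]
  refine sum_mem fun i _ => ?_
  exact degLESubmodule_mono (kdeg_mono hμc hrank (Nat.lt_succ_iff.1 i.2))
    (monomial_mem_degLESubmodule hinj _ _)

lemma mem_degLESubmodule_of_mem_Lspan (hinj : Function.Injective α) (hp : IsONBasis μ α p)
    {n : ℕ} {q : MvPolynomial (Fin d) ℂ} (hq : q ∈ Lspan p n) :
    q ∈ degLESubmodule α (kdeg μ α n) := by
  obtain ⟨c, rfl⟩ := hq
  refine sum_mem fun j _ => smul_mem _ _ ?_
  exact degLESubmodule_mono (kdeg_mono hμc hrank (Nat.lt_succ_iff.1 j.2))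
    (hp.mem_degLESubmodule hμc hrank hinj j)

lemma exists_mem_Lspan_toL2_eq (hα : Function.Bijective α) (hp : IsONBasis μ α p) {k n : ℕ}
    (h1 : kdeg μ α n ≤ k) (h2 : k < kdeg μ α (n + 1)) {q : MvPolynomial (Fin d) ℂ}
    (hq : q ∈ degLESubmodule α k) : ∃ s ∈ Lspan p n, toL2 hμc q = toL2 hμc s := by
  set e : Fin (n + 1) → Lp ℂ 2 μ := fun j => toL2 hμc (p j)
  have he : Orthonormal ℂ e := (hp.orthonormal_toL2 hμc).comp _ Fin.val_injective
  have hle : span ℂ (Set.range e) ≤ momentSpan hμc α k := by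
    rw [span_le]
    rintro _ ⟨j, rfl⟩
    exact toL2_mem_momentSpan hμc hα.2 (degLESubmodule_mono h1
      (hp.mem_degLESubmodule_of_mem_Lspan hμc hrank hα.1 ⟨Pi.single j 1, by simp⟩))
  have heq : span ℂ (Set.range e) = momentSpan hμc α k := by
    refine eq_of_le_of_finrank_le hle ?_
    rw [finrank_span_eq_card he.linearIndependent, Fintype.card_fin, ← rank_momentMatrix_s2 hμc]
    exact rank_momentMatrix_le_of_lt_kdeg hμc hrank h2
  obtain ⟨c, hc⟩ := (mem_span_range_iff_exists_fun ℂ).1 (heq ▸ toL2_mem_momentSpan hμc hα.2 hq)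
  exact ⟨∑ j, c j • p j, ⟨c, rfl⟩, by simp [← hc, e]⟩

end IsONBasis

section Kernel

variable {μ : Measure (Fin d → ℂ)} {α : ℕ → (Fin d →₀ ℕ)} {p : ℕ → MvPolynomial (Fin d) ℂ}

/-- The polynomial `w ↦ K_n(w, z)`. -/
noncomputable def kernelPoly (p : ℕ → MvPolynomial (Fin d) ℂ) (n : ℕ) (z : Fin d → ℂ) :
    MvPolynomial (Fin d) ℂ :=
  ∑ j : Fin (n + 1), starRingEnd ℂ (eval z (p j)) • p j

lemma CDkernel_self (p : ℕ → MvPolynomial (Fin d) ℂ) (n : ℕ) (z : Fin d → ℂ) :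
    CDkernel p n z z = ((∑ j ∈ range (n + 1), ‖eval z (p j)‖ ^ 2 : ℝ) : ℂ) := by
  simp [CDkernel, Complex.mul_conj, Complex.normSq_eq_norm_sq]

lemma kernelPoly_mem_Lspan (n : ℕ) (z : Fin d → ℂ) : kernelPoly p n z ∈ Lspan p n := ⟨_, rfl⟩

lemma eval_kernelPoly (n : ℕ) (z : Fin d → ℂ) :
    eval z (kernelPoly p n z) = CDkernel p n z z := by
  rw [kernelPoly, CDkernel,
    ← Fin.sum_univ_eq_sum_range fun j => eval z (p j) * starRingEnd ℂ (eval z (p j))]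
  simp [smul_eval, mul_comm]

lemma CDkernel_re_pos (hμ0 : μ ≠ 0) [IsFiniteMeasure μ] (hα0 : α 0 = 0) (hp : IsONBasis μ α p)
    (n : ℕ) (z : Fin d → ℂ) : 0 < (CDkernel p n z z).re := by
  obtain ⟨c, hc, -, hp0⟩ := (hp 0).2 0 le_rfl
  have hp0z : eval z (p 0) ≠ 0 := by
    have : eval z (p 0) = c 0 := by simp [hp0, kdeg_zero hμ0 hα0, hα0]
    rw [this]
    exact fun h => hc.ne' (by rw [show Fin.last 0 = 0 from rfl, h, Complex.zero_re])
  rw [CDkernel_self, Complex.ofReal_re]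
  calc 0 < ‖eval z (p 0)‖ ^ 2 := by positivity
    _ ≤ _ := single_le_sum (f := fun j => ‖eval z (p j)‖ ^ 2) (fun _ _ => by positivity)
        (mem_range.2 n.succ_pos)

variable [IsFiniteMeasure μ] (hμc : IsCompact (msupport μ))
include hμc

lemma inner2_kernelPoly (hp : IsONBasis μ α p) {n : ℕ} {q : MvPolynomial (Fin d) ℂ}
    (hq : q ∈ Lspan p n) (z : Fin d → ℂ) : inner2 μ q (kernelPoly p n z) = eval z q := by
  obtain ⟨c, rfl⟩ := hq
  have he : Orthonormal ℂ fun j : Fin (n + 1) => toL2 hμc (p j) :=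
    (hp.orthonormal_toL2 hμc).comp _ Fin.val_injective
  rw [inner2_eq_inner hμc, kernelPoly]
  simp only [map_sum, map_smul]
  rw [he.inner_sum]
  simp [smul_eval, mul_comm]

lemma norm2_kernelPoly (hp : IsONBasis μ α p) (n : ℕ) (z : Fin d → ℂ) :
    norm2 μ (kernelPoly p n z) = √(CDkernel p n z z).re := by
  rw [norm2, inner2_kernelPoly hμc hp (kernelPoly_mem_Lspan n z), eval_kernelPoly]

lemma one_div_sqrt_le_norm2 (hp : IsONBasis μ α p) {n : ℕ} {z : Fin d → ℂ}
    {q : MvPolynomial (Fin d) ℂ} (hq : inner2 μ q (kernelPoly p n z) = 1) :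
    1 / √(CDkernel p n z z).re ≤ norm2 μ q := by
  have hcs : 1 ≤ √(CDkernel p n z z).re * norm2 μ q := by
    calc (1 : ℝ) = ‖inner2 μ q (kernelPoly p n z)‖ := by rw [hq, norm_one]
      _ ≤ ‖toL2 hμc (kernelPoly p n z)‖ * ‖toL2 hμc q‖ := by
        rw [inner2_eq_inner hμc]
        exact norm_inner_le_norm _ _
      _ = _ := by rw [← norm2_eq_norm, ← norm2_eq_norm, norm2_kernelPoly hμc hp]
  have hK : 0 < √(CDkernel p n z z).re := by
    refine (Real.sqrt_nonneg _).lt_of_ne fun h => ?_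
    rw [← h, zero_mul] at hcs
    norm_num at hcs
  rwa [div_le_iff₀' hK]

lemma exists_mem_Lspan_norm2_eq (hp : IsONBasis μ α p) {n : ℕ} {z : Fin d → ℂ}
    (hK : 0 < (CDkernel p n z z).re) :
    ∃ q ∈ Lspan p n, eval z q = 1 ∧ norm2 μ q = 1 / √(CDkernel p n z z).re := by
  have hKre : CDkernel p n z z = ((CDkernel p n z z).re : ℂ) := by
    rw [CDkernel_self, Complex.ofReal_re]
  set K := CDkernel p n z z
  have hK0 : K ≠ 0 := by
    rw [hKre]
    exact Complex.ofReal_ne_zero.2 hK.ne'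
  refine ⟨K⁻¹ • kernelPoly p n z, ⟨fun j => K⁻¹ * starRingEnd ℂ (eval z (p j)), ?_⟩, ?_, ?_⟩
  · simp [kernelPoly, smul_sum, smul_smul]
  · rw [smul_eval, eval_kernelPoly, inv_mul_cancel₀ hK0]
  · rw [norm2_eq_norm hμc, map_smul, norm_smul, ← norm2_eq_norm hμc, norm2_kernelPoly hμc hp,
      norm_inv, hKre, Complex.norm_of_nonneg hK.le, Complex.ofReal_re, inv_mul_eq_div,
      Real.sqrt_div_self']

end Kernel

lemma inner2_kernelPoly_of_mem_Svariety {μ : Measure (Fin d → ℂ)} [IsFiniteMeasure μ]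
    (hμc : IsCompact (msupport μ)) {α : ℕ → (Fin d →₀ ℕ)} (hα : Function.Bijective α)
    (hrank : ∀ m : ℕ, ∃ k : ℕ, m + 1 ≤ (momentMatrix μ α k).rank)
    {p : ℕ → MvPolynomial (Fin d) ℂ} (hp : IsONBasis μ α p) {k n : ℕ}
    (h1 : kdeg μ α n ≤ k) (h2 : k < kdeg μ α (n + 1)) {z : Fin d → ℂ}
    (hz : z ∈ Svariety μ α (n + 1)) {q : MvPolynomial (Fin d) ℂ} (hq : q ∈ degLESubmodule α k) :
    inner2 μ q (kernelPoly p n z) = eval z q := by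
  obtain ⟨s, hs, hqs⟩ := hp.exists_mem_Lspan_toL2_eq hμc hrank hα h1 h2 hq
  have hsk : s ∈ degLESubmodule α k :=
    degLESubmodule_mono h1 (hp.mem_degLESubmodule_of_mem_Lspan hμc hrank hα.1 hs)
  have hnull : q - s ∈ NidealLE μ α (n + 1) :=
    ⟨mem_Nideal_of_toL2_eq_zero hμc (by rw [map_sub, hqs, sub_self]),
      degLESubmodule_mono h2.le (sub_mem hq hsk)⟩
  have hzs : eval z q = eval z s := sub_eq_zero.1 (by rw [← map_sub]; exact hz _ hnull)
  rw [hzs, ← inner2_kernelPoly hμc hp hs, inner2_eq_inner hμc, inner2_eq_inner hμc, hqs]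

/-- Extremal characterizations of the Christoffel function `1/K_n^μ(z,z)`. -/
theorem statement2 (μ : Measure (Fin d → ℂ)) [IsFiniteMeasure μ]
    (hμ0 : μ ≠ 0) (hμc : IsCompact (msupport μ))
    (α : ℕ → (Fin d →₀ ℕ)) (hα : AdmissibleEnum α)
    (hrank : ∀ m : ℕ, ∃ k : ℕ, m + 1 ≤ (momentMatrix μ α k).rank)
    (p : ℕ → MvPolynomial (Fin d) ℂ) (hp : IsONBasis μ α p) :
    (∀ (n : ℕ) (z : Fin d → ℂ),
      IsLeast {r : ℝ | ∃ q ∈ Lspan p n, MvPolynomial.eval z q = 1 ∧ r = norm2 μ q}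
        (1 / Real.sqrt ((CDkernel p n z z).re))) ∧
    (∀ k n : ℕ, kdeg μ α n ≤ k → k < kdeg μ α (n + 1) →
      ∀ z ∈ Svariety μ α (n + 1),
      IsLeast {r : ℝ | ∃ q : MvPolynomial (Fin d) ℂ,
          DegLE α q k ∧ MvPolynomial.eval z q = 1 ∧ r = norm2 μ q}
        (1 / Real.sqrt ((CDkernel p n z z).re))) := by
  obtain ⟨hαbij, hα0, -⟩ := hα
  have hK n z := CDkernel_re_pos hμ0 hα0 hp n z
  refine ⟨fun n z => ⟨?_, ?_⟩, fun k n h1 h2 z hz => ⟨?_, ?_⟩⟩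
  · obtain ⟨q, hq, hq1, hqn⟩ := exists_mem_Lspan_norm2_eq hμc hp (hK n z)
    exact ⟨q, hq, hq1, hqn.symm⟩
  · rintro _ ⟨q, hq, hq1, rfl⟩
    exact one_div_sqrt_le_norm2 hμc hp (by rw [inner2_kernelPoly hμc hp hq, hq1])
  · obtain ⟨q, hq, hq1, hqn⟩ := exists_mem_Lspan_norm2_eq hμc hp (hK n z)
    exact ⟨q, degLESubmodule_mono h1 (hp.mem_degLESubmodule_of_mem_Lspan hμc hrank hαbij.1 hq),
      hq1, hqn.symm⟩
  · rintro _ ⟨q, hq, hq1, rfl⟩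
    refine one_div_sqrt_le_norm2 hμc hp ?_
    rw [inner2_kernelPoly_of_mem_Svariety hμc hαbij hrank hp h1 h2 hz hq, hq1]

end CD
end
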